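/- arXiv:1703.09624 — 3 statements merged into one kernel-verified Lean document; each statement's English description precedes it below -/
import Mathlib

section
/- Let n ≥ 1 and λ₀ ∈ ℂ, and let M(λ₀) be the binomial matrix defined below. Then the determinant of the 2n×2n submatrix M₂ of M(λ₀) consisting of its first 2n columns equals 2^n. -/
/-- The binomial matrix `M(λ₀)` of size `2n × (2n+1)` (rows and columns here
0-indexed; row `2m−1` ↦ even index, row `2m` ↦ odd index, etc.):
for `1 ≤ m ≤ n`, `1 ≤ k ≤ n`,
`M_{2m−1,2k−1} = M_{2m−1,2k} = C(k−1,m−1)·λ₀^(k−m)`,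
`M_{2m,2k−1} = −C(k−1,m−1)·conj(λ₀)^(k−m)`, `M_{2m,2k} = C(k−1,m−1)·conj(λ₀)^(k−m)`,
and last column `M_{2m−1,2n+1} = C(n,m−1)·λ₀^(n+1−m)`,
`M_{2m,2n+1} = −C(n,m−1)·conj(λ₀)^(n+1−m)`. -/
noncomputable def binM (n : ℕ) (l : ℂ) : Matrix (Fin (2*n)) (Fin (2*n+1)) ℂ :=
  Matrix.of fun r c =>
    let m0 := (r : ℕ) / 2
    if (c : ℕ) = 2*n then
      if (r : ℕ) % 2 = 0 then (Nat.choose n m0 : ℂ) * l ^ (n - m0)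
      else -((Nat.choose n m0 : ℂ) * (starRingEnd ℂ l) ^ (n - m0))
    else
      let k0 := (c : ℕ) / 2
      if (r : ℕ) % 2 = 0 then (Nat.choose k0 m0 : ℂ) * l ^ (k0 - m0)
      else if (c : ℕ) % 2 = 0 then
        -((Nat.choose k0 m0 : ℂ) * (starRingEnd ℂ l) ^ (k0 - m0))
      else (Nat.choose k0 m0 : ℂ) * (starRingEnd ℂ l) ^ (k0 - m0)

/-!
Reorder rows and columns so that those of odd (1-based) index come first. The matrix becomes
`[[U(λ₀), U(λ₀)], [-U(λ̄₀), U(λ̄₀)]]`, where `U(z) = (C(k, m) z^(k-m))_{m,k}` is upper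
unitriangular. Subtracting the first block column from the second gives a block lower triangular
matrix with diagonal blocks `U(λ₀)` and `2 U(λ̄₀)`, whose determinant is `2^n`.
-/

namespace Matrix

variable {R ι : Type*} [CommRing R] [Fintype ι] [DecidableEq ι]

theorem det_fromBlocks_self_neg_self (A B : Matrix ι ι R) :
    (fromBlocks A A (-B) B).det = 2 ^ Fintype.card ι * A.det * B.det := by
  have hmul : fromBlocks A A (-B) B * fromBlocks 1 (-1) 0 1 =
      fromBlocks A 0 (-B) ((2 : R) • B) := by
    simp only [fromBlocks_multiply, Matrix.mul_one, Matrix.mul_zero, Matrix.mul_neg, add_zero,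
      neg_add_cancel, neg_neg, two_smul]
  have := congrArg det hmul
  rw [det_mul, det_fromBlocks_zero₂₁, det_fromBlocks_zero₁₂, det_smul] at this
  simpa [mul_comm, mul_left_comm] using this

end Matrix

open Matrix

section

variable {R : Type*} [CommRing R]

def binomialShift (n : ℕ) (z : R) : Matrix (Fin n) (Fin n) R :=
  of fun m k => (k.1.choose m : R) * z ^ (k.1 - m)

theorem det_binomialShift (n : ℕ) (z : R) : (binomialShift n z).det = 1 := by
  rw [det_of_isUpperTriangular]
  · simp [binomialShift]
  · intro i j (h : j < i)
    simp [binomialShift, Nat.choose_eq_zero_of_lt h]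

end

def finSumFinEquivInterleave (n : ℕ) : Fin n ⊕ Fin n ≃ Fin (2 * n) where
  toFun := Sum.elim (fun m => ⟨2 * m, by omega⟩) (fun m => ⟨2 * m + 1, by omega⟩)
  invFun r := if r.1 % 2 = 0 then .inl ⟨r / 2, by omega⟩ else .inr ⟨r / 2, by omega⟩
  left_inv x := by rcases x with m | m <;> simp [Nat.mul_add_div]
  right_inv r := by by_cases h : r.1 % 2 = 0 <;> simp [h, Fin.ext_iff] <;> omega

theorem binM_castSucc_submatrix_interleave (n : ℕ) (l : ℂ) :
    (of fun i (j : Fin (2 * n)) => binM n l i j.castSucc).submatrix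
        (finSumFinEquivInterleave n) (finSumFinEquivInterleave n) =
      fromBlocks (binomialShift n l) (binomialShift n l)
        (-binomialShift n (starRingEnd ℂ l)) (binomialShift n (starRingEnd ℂ l)) := by
  ext (m | m) (k | k) <;>
    simp [binM, binomialShift, finSumFinEquivInterleave, Nat.mul_add_div,
      show 2 * k.1 ≠ 2 * n by omega, show 2 * k.1 + 1 ≠ 2 * n by omega]

theorem stmt4_general (n : ℕ) (l : ℂ) :
    Matrix.det (Matrix.of fun i (j : Fin (2*n)) => binM n l i j.castSucc) =
      2 ^ n := by
  rw [← det_submatrix_equiv_self (finSumFinEquivInterleave n),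
    binM_castSucc_submatrix_interleave, det_fromBlocks_self_neg_self, det_binomialShift,
    det_binomialShift, Fintype.card_fin, mul_one, mul_one]

/-- The determinant of the `2n × 2n` submatrix `M₂` of `M(λ₀)` consisting of
its first `2n` columns equals `2^n`. -/
theorem stmt4 (n : ℕ) (hn : 1 ≤ n) (l : ℂ) :
    Matrix.det (Matrix.of fun i (j : Fin (2*n)) => binM n l i j.castSucc) =
      2 ^ n :=
  stmt4_general n l
end

section
/- Let n ≥ 1 and λ₀ ∈ ℂ, and let M(λ₀) be the binomial matrix defined below. Then the determinant of the 2n×2n submatrix M₁ of M(λ₀) consisting of its columns 1, 2, …, 2n−1, 2n+1 equals 2^{n−1}·n·(λ₀ − λ₀̄). -/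
open Matrix Polynomial
open scoped Kronecker

namespace Matrix

variable {R : Type*}

def taylorMatrix [Semiring R] (n : ℕ) (t : R) : Matrix (Fin n) (Fin n) R :=
  of fun m k => ((k : ℕ).choose m : R) * t ^ ((k : ℕ) - m)

theorem blockDiagonal_mul_one_kronecker_apply [Semiring R] {ι o : Type*} [Fintype ι] [Fintype o]
    [DecidableEq ι] [DecidableEq o] (T : o → Matrix ι ι R) (B : Matrix o o R) (i k : ι)
    (p q : o) : (blockDiagonal T * ((1 : Matrix ι ι R) ⊗ₖ B)) (i, p) (k, q) = T p i k * B p q := by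
  simp [mul_apply, Fintype.sum_prod_type, blockDiagonal_apply, one_apply]

variable [CommRing R]

theorem det_taylorMatrix (n : ℕ) (t : R) : (taylorMatrix n t).det = 1 := by
  rw [det_of_isUpperTriangular]
  · simp [taylorMatrix]
  · intro i j hji
    simp [taylorMatrix, Nat.choose_eq_zero_of_lt (show (j : ℕ) < i from hji)]

theorem taylorMatrix_mulVec_choose_mul_neg_pow (n : ℕ) (t : R) (m : Fin n) :
    (taylorMatrix n t *ᵥ fun k => (n.choose k : R) * (-t) ^ (n - k)) m =
      -((n.choose m : R) * t ^ (n - m)) := by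
  -- compare the coefficients of `X ^ m` in `X ^ n = ((X + t) - t) ^ n`
  have hX : ((X : R[X]) ^ n).coeff m = 0 := by simp [coeff_X_pow, m.isLt.ne]
  rw [show (X : R[X]) = (X + C t) + C (-t) by simp, add_pow, finsetSum_coeff,
    Finset.sum_range_succ, ← Fin.sum_univ_eq_sum_range] at hX
  simp only [← C_pow, ← C_eq_natCast, mul_assoc, ← C_mul, coeff_mul_C, coeff_X_add_C_pow] at hX
  rw [eq_neg_iff_add_eq_zero, ← hX]
  congr 1
  · simp only [mulVec, dotProduct]
    exact Finset.sum_congr rfl fun k _ => by simp only [taylorMatrix, of_apply]; ring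
  · simp [mul_comm]

theorem det_updateCol_mulVec {ι : Type*} [Fintype ι] [DecidableEq ι] (A : Matrix ι ι R) (j : ι)
    (c : ι → R) : (A.updateCol j (A *ᵥ c)).det = c j * A.det := by
  rw [← smul_eq_mul, ← det_updateCol_sum]
  congr
  ext k
  simp [mulVec, dotProduct, mul_comm]

end Matrix

def interleave (n : ℕ) : Fin n × Fin 2 ≃ Fin (2 * n) :=
  finProdFinEquiv.trans (finCongr (Nat.mul_comm n 2))

theorem interleave_val (n : ℕ) (k : Fin n) (q : Fin 2) :
    (interleave n (k, q) : ℕ) = q + 2 * k := rfl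

theorem binM_interleave_castSucc (n : ℕ) (l : ℂ) (m k : Fin n) (p q : Fin 2) :
    binM n l (interleave n (m, p)) (interleave n (k, q)).castSucc =
      taylorMatrix n (![l, starRingEnd ℂ l] p) m k * !![1, 1; -1, 1] p q := by
  have hk := k.isLt
  fin_cases p <;> fin_cases q <;>
    simp [binM, taylorMatrix, interleave_val, Nat.add_mul_div_left, Nat.add_mod] <;> omega

theorem binM_interleave_last (n : ℕ) (l : ℂ) (m : Fin n) (p : Fin 2) :
    binM n l (interleave n (m, p)) (Fin.last _) =
      ![1, -1] p * ((n.choose m : ℂ) * ![l, starRingEnd ℂ l] p ^ (n - m)) := by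
  fin_cases p <;> simp [binM, interleave_val, Nat.add_mul_div_left, Nat.add_mod]

noncomputable def binMinor (n : ℕ) (l : ℂ) : Matrix (Fin (2 * n)) (Fin (2 * n)) ℂ :=
  of fun i j => if (j : ℕ) + 1 = 2 * n then binM n l i (Fin.last (2 * n)) else binM n l i j.castSucc

section
variable (n : ℕ) (l : ℂ)

noncomputable def taylorBlocks : Matrix (Fin n × Fin 2) (Fin n × Fin 2) ℂ :=
  blockDiagonal fun p => taylorMatrix n (![l, starRingEnd ℂ l] p)

def sumDiffBlocks : Matrix (Fin n × Fin 2) (Fin n × Fin 2) ℂ :=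
  (1 : Matrix (Fin n) (Fin n) ℂ) ⊗ₖ !![1, 1; -1, 1]

noncomputable def lastColCoeffs : Fin n × Fin 2 → ℂ := fun (k, q) =>
  n.choose k * ![-((-l) ^ (n - k) + (-starRingEnd ℂ l) ^ (n - k)),
    (-starRingEnd ℂ l) ^ (n - k) - (-l) ^ (n - k)] q / 2

theorem det_taylorBlocks : (taylorBlocks n l).det = 1 := by
  simp [taylorBlocks, det_blockDiagonal, det_taylorMatrix]

theorem det_sumDiffBlocks : (sumDiffBlocks n).det = 2 ^ n := by
  rw [sumDiffBlocks, det_kronecker, det_fin_two_of]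
  norm_num

theorem taylorBlocks_mul_sumDiffBlocks_mulVec_lastColCoeffs (m : Fin n) (p : Fin 2) :
    ((taylorBlocks n l * sumDiffBlocks n) *ᵥ lastColCoeffs n l) (m, p) =
      binM n l (interleave n (m, p)) (Fin.last _) := by
  simp only [mulVec, dotProduct, Fintype.sum_prod_type, Fin.sum_univ_two, taylorBlocks,
    sumDiffBlocks, blockDiagonal_mul_one_kronecker_apply, binM_interleave_last]
  have key := taylorMatrix_mulVec_choose_mul_neg_pow n (![l, starRingEnd ℂ l] p) m
  simp only [mulVec, dotProduct] at key
  rw [show ∀ x : ℂ, ![1, -1] p * x = -![1, -1] p * -x by intro x; ring, ← key, Finset.mul_sum]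
  refine Finset.sum_congr rfl fun k _ => ?_
  fin_cases p <;> simp [lastColCoeffs] <;> ring

theorem binMinor_submatrix_interleave (hn : 1 ≤ n) :
    (binMinor n l).submatrix (interleave n) (interleave n) =
      updateCol (taylorBlocks n l * sumDiffBlocks n) (⟨n - 1, by omega⟩, 1)
        ((taylorBlocks n l * sumDiffBlocks n) *ᵥ lastColCoeffs n l) := by
  ext ⟨m, p⟩ ⟨k, q⟩
  have hlast : (interleave n (k, q) : ℕ) + 1 = 2 * n ↔ (k, q) = (⟨n - 1, by omega⟩, 1) := by
    rw [interleave_val, Prod.ext_iff, Fin.ext_iff, Fin.ext_iff]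
    have := k.isLt
    have := q.isLt
    simp only [Fin.val_one]
    omega
  rw [updateCol_apply, submatrix_apply, binMinor, of_apply]
  by_cases h : (k, q) = (⟨n - 1, by omega⟩, 1)
  · rw [if_pos (hlast.mpr h), if_pos h, taylorBlocks_mul_sumDiffBlocks_mulVec_lastColCoeffs]
  · rw [if_neg (mt hlast.mp h), if_neg h, binM_interleave_castSucc, taylorBlocks, sumDiffBlocks,
      blockDiagonal_mul_one_kronecker_apply]

end

/-- The determinant of the `2n × 2n` submatrix `M₁` of `M(λ₀)` consisting of
its columns `1, …, 2n−1, 2n+1` equals `2^(n−1)·n·(λ₀ − conj λ₀)`. -/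
theorem stmt5 (n : ℕ) (hn : 1 ≤ n) (l : ℂ) :
    Matrix.det (Matrix.of fun i (j : Fin (2*n)) =>
        if (j : ℕ) + 1 = 2*n then binM n l i (Fin.last (2*n))
        else binM n l i j.castSucc) =
      (2 : ℂ) ^ (n-1) * (n : ℂ) * (l - starRingEnd ℂ l) := by
  show (binMinor n l).det = _
  rw [← det_submatrix_equiv_self (interleave n), binMinor_submatrix_interleave n l hn,
    det_updateCol_mulVec, det_mul, det_taylorBlocks, det_sumDiffBlocks]
  obtain ⟨k, rfl⟩ := Nat.exists_eq_add_of_le' hn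
  simp [lastColCoeffs]
  ring
end

section
/- Let n ≥ 1, λ₀ ∈ ℂ, and let (c_k)_{k≥0} be any sequence of complex numbers. Let D be the convolved matrix and M(λ₀) the binomial matrix defined below. Let L be the 2n×2n complex matrix with L_{2m−1,2l−1} = c_{m−l} and L_{2m,2l} = (c_{m−l})̄ for 1 ≤ l ≤ m ≤ n, and all other entries zero. Then D = L·M(λ₀). -/
/-- The convolved matrix `D` of size `2n × (2n+1)`:
for `1 ≤ m ≤ n`, `1 ≤ k ≤ n`,
`D_{2m−1,2k−1} = D_{2m−1,2k} = Σ_{j=0}^{m−1} C(k−1,j)·λ₀^(k−1−j)·c_{m−1−j}`,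
`D_{2m,2k−1} = −Σ_{j=0}^{m−1} C(k−1,j)·conj(λ₀)^(k−1−j)·conj(c_{m−1−j})`,
`D_{2m,2k} = Σ_{j=0}^{m−1} C(k−1,j)·conj(λ₀)^(k−1−j)·conj(c_{m−1−j})`,
with last column
`D_{2m−1,2n+1} = Σ_{j=0}^{m−1} C(n,j)·λ₀^(n−j)·c_{m−1−j}`,
`D_{2m,2n+1} = −Σ_{j=0}^{m−1} C(n,j)·conj(λ₀)^(n−j)·conj(c_{m−1−j})`. -/
noncomputable def convD (n : ℕ) (l : ℂ) (cs : ℕ → ℂ) :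
    Matrix (Fin (2*n)) (Fin (2*n+1)) ℂ :=
  Matrix.of fun r c =>
    let m0 := (r : ℕ) / 2
    if (c : ℕ) = 2*n then
      if (r : ℕ) % 2 = 0 then
        ∑ j ∈ Finset.range (m0+1), (Nat.choose n j : ℂ) * l ^ (n - j) * cs (m0 - j)
      else
        -∑ j ∈ Finset.range (m0+1),
          (Nat.choose n j : ℂ) * (starRingEnd ℂ l) ^ (n - j) * starRingEnd ℂ (cs (m0 - j))
    else
      let k0 := (c : ℕ) / 2
      if (r : ℕ) % 2 = 0 then
        ∑ j ∈ Finset.range (m0+1), (Nat.choose k0 j : ℂ) * l ^ (k0 - j) * cs (m0 - j)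
      else if (c : ℕ) % 2 = 0 then
        -∑ j ∈ Finset.range (m0+1),
          (Nat.choose k0 j : ℂ) * (starRingEnd ℂ l) ^ (k0 - j) * starRingEnd ℂ (cs (m0 - j))
      else
        ∑ j ∈ Finset.range (m0+1),
          (Nat.choose k0 j : ℂ) * (starRingEnd ℂ l) ^ (k0 - j) * starRingEnd ℂ (cs (m0 - j))

/-- The block lower-triangular matrix `L` with `L_{2m−1,2l−1} = c_{m−l}` and
`L_{2m,2l} = conj(c_{m−l})` for `1 ≤ l ≤ m ≤ n`, all other entries zero. -/
noncomputable def lowerL (n : ℕ) (cs : ℕ → ℂ) : Matrix (Fin (2*n)) (Fin (2*n)) ℂ :=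
  Matrix.of fun r c =>
    if (r : ℕ) % 2 = (c : ℕ) % 2 ∧ (c : ℕ)/2 ≤ (r : ℕ)/2 then
      if (r : ℕ) % 2 = 0 then cs ((r : ℕ)/2 - (c : ℕ)/2)
      else starRingEnd ℂ (cs ((r : ℕ)/2 - (c : ℕ)/2))
    else 0

theorem Fin.sum_ite_mod_two_eq_and_div_two_le {M : Type*} [AddCommMonoid M] {n m b : ℕ}
    (hm : m < n) (hb : b < 2) (f : Fin (2 * n) → M) :
    ∑ t : Fin (2 * n), (if b = (t : ℕ) % 2 ∧ (t : ℕ) / 2 ≤ m then f t else 0) =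
      ∑ j : Fin (m + 1), f ⟨2 * j + b, by omega⟩ := by
  rw [← Finset.sum_filter]
  symm
  refine Finset.sum_bij (fun j _ => ⟨2 * j + b, by omega⟩) (fun j _ => ?_) (fun i _ j _ h => ?_)
    (fun t ht => ⟨⟨(t : ℕ) / 2, ?_⟩, Finset.mem_univ _, ?_⟩) (fun _ _ => rfl)
  · simp only [Finset.mem_filter, Finset.mem_univ, true_and]
    omega
  · simp only [Fin.mk.injEq] at h
    exact Fin.ext (by omega)
  all_goals simp only [Finset.mem_filter, Finset.mem_univ, true_and] at ht
  · omega
  · exact Fin.ext (by simp only; omega)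

theorem lowerL_mul_apply {α : Type*} (n : ℕ) (cs : ℕ → ℂ) (A : Matrix (Fin (2 * n)) α ℂ)
    (r : Fin (2 * n)) (c : α) :
    (lowerL n cs * A) r c = ∑ j : Fin ((r : ℕ) / 2 + 1),
      (if (r : ℕ) % 2 = 0 then cs ((r : ℕ) / 2 - j) else starRingEnd ℂ (cs ((r : ℕ) / 2 - j))) *
        A ⟨2 * j + (r : ℕ) % 2, by omega⟩ c := by
  have hr := r.isLt
  rw [Matrix.mul_apply]
  calc ∑ t, lowerL n cs r t * A t c
      = ∑ t : Fin (2 * n), if (r : ℕ) % 2 = (t : ℕ) % 2 ∧ (t : ℕ) / 2 ≤ (r : ℕ) / 2 then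
          (if (r : ℕ) % 2 = 0 then cs ((r : ℕ) / 2 - (t : ℕ) / 2)
            else starRingEnd ℂ (cs ((r : ℕ) / 2 - (t : ℕ) / 2))) * A t c else 0 := by
        simp only [lowerL, Matrix.of_apply, ite_mul, zero_mul]
    _ = _ := by
        rw [Fin.sum_ite_mod_two_eq_and_div_two_le (by omega) (Nat.mod_lt _ two_pos)]
        simp only [Nat.mul_add_div two_pos, Nat.div_eq_of_lt (Nat.mod_lt _ two_pos), add_zero]

theorem stmt7_general (n : ℕ) (l : ℂ) (cs : ℕ → ℂ) :
    convD n l cs = lowerL n cs * binM n l := by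
  ext r c
  rw [lowerL_mul_apply]
  have hmod (j : ℕ) : (2 * j + (r : ℕ) % 2) % 2 = (r : ℕ) % 2 := by omega
  have hdiv (j : ℕ) : (2 * j + (r : ℕ) % 2) / 2 = j := by omega
  simp only [convD, binM, Matrix.of_apply, hmod, hdiv]
  split_ifs <;>
    simp only [← Fin.sum_univ_eq_sum_range, ← Finset.sum_neg_distrib] <;>
    exact Finset.sum_congr rfl fun j _ => by ring

/-- The convolved matrix `D` factors as `L · M(λ₀)`. -/
theorem stmt7 (n : ℕ) (hn : 1 ≤ n) (l : ℂ) (cs : ℕ → ℂ) :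
    convD n l cs = lowerL n cs * binM n l :=
  stmt7_general n l cs
end
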